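/- For n ≥ 4, (n−4)·A(n, n−4) = n · Σ_{i+j=n, i,j≥1} A(i+1, i−2)·A(j+1, j−3), where A counts dissections as defined. -/

import Mathlib

/-! On the nonzero terms, `A (a + 3) a` is the Catalan number `C (a + 1)` and `A (b + 4) b` is
`(2b+3).choose b`, so for `n = m + 5` the sum is the convolution
`∑_{a+b=m} C (a + 1) · (2b+3).choose b`. This is an instance of
`∑_{p+q=m} C p · (2q+k).choose q = (2m+k+1).choose m`, proved by induction on `m` and `k` via
Pascal's rule; the base case `k = 0` follows by symmetrizing `p ↔ q` and using
`(q + 1) · C q = centralBinom q` together with the Catalan recursion. What remains is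
`(m + 1) · (2m+5).choose (m + 1) = (m + 5) · (2m+5).choose m`. -/

def A (n k : ℤ) : ℕ :=
  if n = 2 ∧ k = 0 then 1
  else if 3 ≤ n ∧ 0 ≤ k ∧ k ≤ n - 3 then
    Nat.choose (n + k - 1).toNat k.toNat * Nat.choose (n - 3).toNat k.toNat / (k.toNat + 1)
  else 0

open Finset Nat

theorem centralBinom_succ_eq_two_mul_choose (m : ℕ) :
    centralBinom (m + 1) = 2 * (2 * m + 1).choose m := by
  rw [centralBinom_eq_two_mul_choose, show 2 * (m + 1) = 2 * m + 1 + 1 by ring,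
    choose_succ_succ', choose_symm_half, ← two_mul]

theorem succ_mul_catalan_succ_eq_choose (a : ℕ) :
    (a + 1) * catalan (a + 1) = (2 * a + 2).choose a := by
  have hcentral : (2 * a + 2).choose (a + 1) = (a + 2) * catalan (a + 1) := by
    rw [succ_mul_catalan_eq_centralBinom, centralBinom_eq_two_mul_choose, mul_add, mul_one]
  have h := choose_succ_right_eq (2 * a + 2) a
  rw [hcentral, show 2 * a + 2 - a = a + 2 by omega] at h
  exact Nat.eq_of_mul_eq_mul_right (by omega : 0 < a + 2) (by rw [← h]; ring)

theorem sum_antidiagonal_catalan_mul_centralBinom (m : ℕ) :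
    ∑ p ∈ antidiagonal m, catalan p.1 * centralBinom p.2 = (2 * m + 1).choose m := by
  have hswap : ∑ p ∈ antidiagonal m, catalan p.1 * centralBinom p.2 =
      ∑ p ∈ antidiagonal m, catalan p.2 * centralBinom p.1 :=
    (Nat.sum_antidiagonal_swap (f := fun p => catalan p.1 * centralBinom p.2)).symm
  have hsym : 2 * ∑ p ∈ antidiagonal m, catalan p.1 * centralBinom p.2 =
      (m + 2) * catalan (m + 1) := by
    rw [two_mul]
    nth_rewrite 2 [hswap]
    rw [← sum_add_distrib, catalan_succ', mul_sum]
    refine sum_congr rfl fun p hp => ?_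
    rw [← succ_mul_catalan_eq_centralBinom, ← succ_mul_catalan_eq_centralBinom,
      ← mem_antidiagonal.mp hp]
    ring
  have hcentral := succ_mul_catalan_eq_centralBinom (m + 1)
  rw [centralBinom_succ_eq_two_mul_choose] at hcentral
  exact Nat.eq_of_mul_eq_mul_left two_pos (hsym.trans hcentral)

theorem sum_antidiagonal_catalan_mul_choose (m k : ℕ) :
    ∑ p ∈ antidiagonal m, catalan p.1 * (2 * p.2 + k).choose p.2 =
      (2 * m + k + 1).choose m := by
  induction m generalizing k with
  | zero => simp
  | succ m ihm =>
    induction k with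
    | zero => simpa [centralBinom_eq_two_mul_choose] using
        sum_antidiagonal_catalan_mul_centralBinom (m + 1)
    | succ k ihk =>
      have hpascal (q : ℕ) : (2 * (q + 1) + (k + 1)).choose (q + 1) =
          (2 * q + (k + 2)).choose q + (2 * (q + 1) + k).choose (q + 1) := by
        rw [show 2 * (q + 1) + (k + 1) = 2 * q + (k + 2) + 1 by ring, choose_succ_succ,
          show 2 * (q + 1) + k = 2 * q + (k + 2) by ring]
      have hsplit :
          ∑ p ∈ antidiagonal m, catalan p.1 * (2 * (p.2 + 1) + (k + 1)).choose (p.2 + 1) =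
          ∑ p ∈ antidiagonal m, catalan p.1 * (2 * p.2 + (k + 2)).choose p.2 +
            ∑ p ∈ antidiagonal m, catalan p.1 * (2 * (p.2 + 1) + k).choose (p.2 + 1) := by
        rw [← sum_add_distrib]
        exact sum_congr rfl fun p _ => by rw [hpascal, mul_add]
      rw [Nat.sum_antidiagonal_succ'] at ihk ⊢
      dsimp only at ihk ⊢
      rw [choose_zero_right, mul_one] at ihk
      rw [hsplit, ihm, choose_zero_right, mul_one,
        show 2 * (m + 1) + (k + 1) + 1 = 2 * m + (k + 2) + 1 + 1 by ring, choose_succ_succ,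
        show 2 * m + (k + 2) + 1 = 2 * (m + 1) + k + 1 by ring, ← ihk]
      ring

theorem sum_antidiagonal_catalan_succ_mul_choose (m : ℕ) :
    ∑ p ∈ antidiagonal m, catalan (p.1 + 1) * (2 * p.2 + 3).choose p.2 =
      (2 * m + 5).choose m := by
  have h := sum_antidiagonal_catalan_mul_choose (m + 1) 3
  rw [Nat.sum_antidiagonal_succ, catalan_zero, one_mul,
    show 2 * (m + 1) + 3 = 2 * m + 5 by ring, choose_succ_succ' (2 * m + 5) m] at h
  dsimp only at h
  omega

theorem A_of_neg {n k : ℤ} (hk : k < 0) : A n k = 0 := by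
  unfold A
  rw [if_neg (by omega), if_neg (by omega)]

theorem A_add_three_self (a : ℕ) : A (a + 3) a = catalan (a + 1) := by
  unfold A
  rw [if_neg (by omega), if_pos ⟨by omega, by omega, by omega⟩,
    show ((a : ℤ) + 3 + a - 1).toNat = 2 * a + 2 by omega,
    show ((a : ℤ) + 3 - 3).toNat = a by omega,
    Int.toNat_natCast, choose_self, mul_one, ← succ_mul_catalan_succ_eq_choose,
    Nat.mul_div_cancel_left _ a.succ_pos]

theorem A_add_four_self (b : ℕ) : A (b + 4) b = (2 * b + 3).choose b := by
  unfold A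
  rw [if_neg (by omega), if_pos ⟨by omega, by omega, by omega⟩,
    show ((b : ℤ) + 4 + b - 1).toNat = 2 * b + 3 by omega,
    show ((b : ℤ) + 4 - 3).toNat = b + 1 by omega,
    Int.toNat_natCast, choose_succ_self_right, Nat.mul_div_cancel _ b.succ_pos]

theorem A_mul_A_eq_zero {n i : ℤ} (hi : i < 2 ∨ n - 3 < i) :
    (A (i + 1) (i - 2) : ℤ) * A (n - i + 1) (n - i - 3) = 0 := by
  rcases hi with hi | hi
  · rw [A_of_neg (by omega : i - 2 < 0), Nat.cast_zero, zero_mul]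
  · rw [A_of_neg (by omega : n - i - 3 < 0), Nat.cast_zero, mul_zero]

theorem sum_Ioo_A_mul_A (m : ℕ) :
    ∑ i ∈ Ioo (0 : ℤ) (m + 5), (A (i + 1) (i - 2) : ℤ) * A (m + 5 - i + 1) (m + 5 - i - 3) =
      ((2 * m + 5).choose m : ℕ) := by
  rw [← sum_antidiagonal_catalan_succ_mul_choose, Nat.cast_sum]
  symm
  refine sum_of_injOn (fun p => (p.1 : ℤ) + 2) ?_ ?_ ?_ ?_
  · intro p hp q hq hpq
    have := mem_antidiagonal.mp hp
    have := mem_antidiagonal.mp hq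
    simp only at hpq
    ext <;> omega
  · intro p hp
    have := mem_antidiagonal.mp hp
    simp only [coe_Ioo, Set.mem_Ioo]
    omega
  · intro i hi hi'
    rw [mem_Ioo] at hi
    refine A_mul_A_eq_zero (by_contra fun h => hi' ⟨((i - 2).toNat, m - (i - 2).toNat), ?_, ?_⟩)
    · exact mem_coe.mpr (mem_antidiagonal.mpr (by omega))
    · simp only
      omega
  · rintro ⟨a, b⟩ hp
    obtain rfl := mem_antidiagonal.mp hp
    simp only
    rw [show (a : ℤ) + 2 + 1 = a + 3 by ring, show (a : ℤ) + 2 - 2 = a by ring,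
      show ((a + b : ℕ) : ℤ) + 5 - (a + 2) + 1 = b + 4 by push_cast; ring,
      show ((a + b : ℕ) : ℤ) + 5 - (a + 2) - 3 = b by push_cast; ring,
      A_add_three_self, A_add_four_self, Nat.cast_mul]

/-- For `n ≥ 4`, `(n-4)·A(n, n-4) = n·∑_{i+j=n, i,j≥1} A(i+1, i-2)·A(j+1, j-3)`. -/
theorem marked_almost_triangulations (n : ℤ) (hn : 4 ≤ n) :
    (n - 4) * (A n (n - 4) : ℤ) =
      n * ∑ i ∈ Finset.Ioo (0 : ℤ) n, (A (i + 1) (i - 2) : ℤ) * (A (n - i + 1) (n - i - 3) : ℤ) := by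
  obtain rfl | ⟨m, rfl⟩ : n = 4 ∨ ∃ m : ℕ, n = m + 5 := by
    rcases hn.eq_or_lt with h | h
    · exact .inl h.symm
    · exact .inr ⟨(n - 5).toNat, by omega⟩
  · rw [sub_self, zero_mul, sum_eq_zero fun i _ => A_mul_A_eq_zero (by omega), mul_zero]
  · have hA : A (m + 5) (m + 5 - 4) = (2 * m + 5).choose (m + 1) := by
      convert A_add_four_self (m + 1) using 2 <;> push_cast <;> ring
    have hratio := choose_succ_right_eq (2 * m + 5) m
    rw [show 2 * m + 5 - m = m + 5 by omega] at hratio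
    have hratioZ :
        ((2 * m + 5).choose (m + 1) : ℤ) * (m + 1) = (2 * m + 5).choose m * (m + 5) := by
      exact_mod_cast hratio
    rw [hA, sum_Ioo_A_mul_A]
    linear_combination hratioZ
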